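/- Let l ∈ (3/4, 1), ε > 0 with l + ε ≤ 1, and set α = l + ε. Define R_1 = Σ_{k=⌈lN⌉}^{⌈αN⌉−1} 3^k·binomial(N,k) and R_2 = Σ_{k=⌈αN⌉}^{N} 3^k·binomial(N,k). Then R_2/R_1 ≤ 4^N·exp(−N·D(α‖3/4)) / (3^{lN}·binomial(N,⌈lN⌉)), and this ratio tends to 0 as N → ∞. -/

import Mathlib

open Finset Real Filter

/-- Kullback–Leibler divergence between Bernoulli(α) and Bernoulli(β). -/
noncomputable def klBer (α β : ℝ) : ℝ :=
  α * Real.log (α / β) + (1 - α) * Real.log ((1 - α) / (1 - β))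

/-- `R₁`: the tail-sum block from `⌈lN⌉` to `⌈αN⌉ - 1`. -/
noncomputable def blockR1 (l α : ℝ) (N : ℕ) : ℝ :=
  ∑ k ∈ Finset.Ico ⌈l * N⌉₊ ⌈α * N⌉₊, (3 : ℝ) ^ k * (N.choose k : ℝ)

/-- `R₂`: the tail-sum block from `⌈αN⌉` to `N`. -/
noncomputable def blockR2 (α : ℝ) (N : ℕ) : ℝ :=
  ∑ k ∈ Finset.Icc ⌈α * N⌉₊ N, (3 : ℝ) ^ k * (N.choose k : ℝ)

/-!
Since `3 ^ k = 4 ^ N (3/4) ^ k (1/4) ^ (N - k)`, the block `R₂` is `4 ^ N` times the upper tail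
of `Bin(N, 3/4)` beyond `αN`, which the Chernoff bound controls. For the limit, the ratio of
consecutive weights `3 ^ k * N.choose k` is `3 (N - k) / (k + 1) ≤ 3 (1 - l) / l < 1` once `k ≥ lN`,
so the weights decay geometrically from the first term of `R₁` on, and `R₂` only starts
`⌈αN⌉ - ⌈lN⌉ ≥ εN - 1` steps later.
-/

theorem sum_Icc_choose_mul_pow_le_div_pow {a b c : ℝ} (ha : 0 ≤ a) (hb : 0 ≤ b) (hc : 1 ≤ c)
    (m N : ℕ) :
    ∑ k ∈ Icc m N, (N.choose k : ℝ) * a ^ k * b ^ (N - k) ≤ (c * a + b) ^ N / c ^ m := by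
  have hc0 : 0 < c := by linarith
  rw [add_pow, sum_div]
  calc ∑ k ∈ Icc m N, (N.choose k : ℝ) * a ^ k * b ^ (N - k)
      ≤ ∑ k ∈ Icc m N, (c * a) ^ k * b ^ (N - k) * N.choose k / c ^ m := by
        refine sum_le_sum fun k hk => ?_
        have hmk : c ^ m ≤ c ^ k := pow_le_pow_right₀ hc (mem_Icc.1 hk).1
        rw [le_div_iff₀ (by positivity)]
        calc (N.choose k : ℝ) * a ^ k * b ^ (N - k) * c ^ m
            ≤ (N.choose k : ℝ) * a ^ k * b ^ (N - k) * c ^ k := by gcongr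
          _ = (c * a) ^ k * b ^ (N - k) * N.choose k := by ring
    _ ≤ ∑ k ∈ range (N + 1), (c * a) ^ k * b ^ (N - k) * N.choose k / c ^ m :=
        sum_le_sum_of_subset_of_nonneg
          (fun k hk => mem_range.2 (Nat.lt_succ_of_le (mem_Icc.1 hk).2))
          fun k _ _ => by positivity

/-- The Chernoff bound for the upper tail of `Bin(N, p)`. -/
theorem sum_Icc_ceil_choose_mul_pow_le_exp {p α : ℝ} (hp : 0 < p) (hpα : p ≤ α) (hα : α ≤ 1)
    (N : ℕ) :
    ∑ k ∈ Icc ⌈α * N⌉₊ N, (N.choose k : ℝ) * p ^ k * (1 - p) ^ (N - k) ≤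
      exp (-N * klBer α p) := by
  rcases hα.eq_or_lt with rfl | hα1
  · have hkl : klBer 1 p = -log p := by simp [klBer]
    rw [one_mul, Nat.ceil_natCast, Icc_self, sum_singleton, hkl, neg_mul_neg, exp_nat_mul,
      exp_log hp]
    simp
  have hp1 : p < 1 := hpα.trans_lt hα1
  have hα0 : 0 < α := hp.trans_le hpα
  have h1p : 0 < 1 - p := by linarith
  have h1α : 0 < 1 - α := by linarith
  -- the minimiser of `(c p + 1 - p) ^ N / c ^ (α N)` over `c > 0`
  set c := α * (1 - p) / (p * (1 - α)) with hc_def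
  have hc0 : 0 < c := by positivity
  have hc : 1 ≤ c := by
    rw [hc_def, le_div_iff₀ (by positivity)]
    nlinarith
  have hbase : c * p + (1 - p) = (1 - p) / (1 - α) := by
    rw [hc_def]
    field_simp
    ring
  have hexponent : log ((1 - p) / (1 - α)) - log c * α = -klBer α p := by
    rw [hc_def, klBer, log_div h1p.ne' h1α.ne', log_div (by positivity) (by positivity),
      log_mul hα0.ne' h1p.ne', log_mul hp.ne' h1α.ne', log_div hα0.ne' hp.ne',
      log_div h1α.ne' h1p.ne']
    ring
  calc _ ≤ (c * p + (1 - p)) ^ N / c ^ ⌈α * N⌉₊ :=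
        sum_Icc_choose_mul_pow_le_div_pow hp.le h1p.le hc _ _
    _ ≤ ((1 - p) / (1 - α)) ^ N / c ^ (α * N) := by
        rw [hbase, ← rpow_natCast c]
        exact div_le_div_of_nonneg_left (by positivity) (by positivity)
          (rpow_le_rpow_of_exponent_le hc (Nat.le_ceil _))
    _ = exp (-N * klBer α p) := by
        rw [rpow_def_of_pos hc0, ← exp_log (by positivity : 0 < (1 - p) / (1 - α)),
          ← exp_nat_mul, ← exp_sub, neg_mul, ← mul_neg, ← hexponent]
        ring_nf

theorem blockR2_eq_four_pow_mul_sum (α : ℝ) (N : ℕ) :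
    blockR2 α N =
      4 ^ N * ∑ k ∈ Icc ⌈α * N⌉₊ N, (N.choose k : ℝ) * (3 / 4) ^ k * (1 - 3 / 4) ^ (N - k) := by
  rw [blockR2, mul_sum]
  refine sum_congr rfl fun k hk => ?_
  have h4 : (4 : ℝ) ^ N = 4 ^ k * 4 ^ (N - k) := by
    rw [← pow_add, Nat.add_sub_cancel' (mem_Icc.1 hk).2]
  calc (3 : ℝ) ^ k * (N.choose k : ℝ) = (3 / 4 * 4) ^ k * (1 / 4 * 4) ^ (N - k) * N.choose k := by
        norm_num
    _ = _ := by rw [h4, mul_pow, mul_pow]; ring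

theorem blockR2_le_four_pow_mul_exp {α : ℝ} (hα34 : 3 / 4 ≤ α) (hα1 : α ≤ 1) (N : ℕ) :
    blockR2 α N ≤ 4 ^ N * exp (-N * klBer α (3 / 4)) := by
  rw [blockR2_eq_four_pow_mul_sum]
  gcongr
  exact sum_Icc_ceil_choose_mul_pow_le_exp (by norm_num) hα34 hα1 N

theorem blockR1_eq_zero_or_le (l α : ℝ) (N : ℕ) :
    blockR1 l α N = 0 ∨ 3 ^ ⌈l * N⌉₊ * (N.choose ⌈l * N⌉₊ : ℝ) ≤ blockR1 l α N := by
  rcases lt_or_ge ⌈l * N⌉₊ ⌈α * N⌉₊ with h | h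
  · refine Or.inr ?_
    rw [blockR1]
    exact single_le_sum (f := fun k => (3 : ℝ) ^ k * N.choose k) (fun k _ => by positivity)
      (left_mem_Ico.2 h)
  · exact Or.inl (by rw [blockR1, Ico_eq_empty_of_le h, sum_empty])

theorem div_le_div_of_eq_zero_or_le {a b c d : ℝ} (hc : 0 ≤ c) (hd : 0 < d) (hac : a ≤ c)
    (hb : b = 0 ∨ d ≤ b) : a / b ≤ c / d := by
  rcases hb with rfl | hdb
  · rw [div_zero]
    positivity
  · exact div_le_div₀ hc hac hd hdb

theorem three_pow_ceil_mul_choose_pos {l : ℝ} (hl : l ≤ 1) (N : ℕ) :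
    0 < 3 ^ ⌈l * N⌉₊ * (N.choose ⌈l * N⌉₊ : ℝ) :=
  mul_pos (by positivity) (Nat.cast_pos.2 (Nat.choose_pos
    (Nat.ceil_le.2 (mul_le_of_le_one_left N.cast_nonneg hl))))

theorem three_mul_one_sub_div_mem_Ico {l : ℝ} (hl34 : 3 / 4 < l) (hl1 : l ≤ 1) :
    3 * (1 - l) / l ∈ Set.Ico 0 1 :=
  ⟨div_nonneg (by linarith) (by linarith), by rw [div_lt_one (by linarith)]; linarith⟩

theorem pow_succ_mul_choose_succ_le {x l : ℝ} (hx : 0 ≤ x) (hl0 : 0 < l) (hl1 : l ≤ 1)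
    {N k : ℕ} (hk : l * N ≤ k) :
    x ^ (k + 1) * N.choose (k + 1) ≤ x * (1 - l) / l * (x ^ k * N.choose k) := by
  rcases lt_or_ge k N with hkN | hNk
  · have hrec : (N.choose (k + 1) : ℝ) * (k + 1) = N.choose k * (N - k) := by
      rw [← Nat.cast_sub hkN.le]
      exact_mod_cast Nat.choose_succ_right_eq N k
    have hratio : (N.choose (k + 1) : ℝ) * l ≤ (1 - l) * N.choose k := by
      refine le_of_mul_le_mul_right ?_ (by positivity : (0 : ℝ) < k + 1)
      calc (N.choose (k + 1) : ℝ) * l * (k + 1) = N.choose k * ((N - k) * l) := by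
            rw [mul_right_comm, hrec, mul_assoc]
        _ ≤ N.choose k * ((1 - l) * (k + 1)) :=
            mul_le_mul_of_nonneg_left (by nlinarith) (Nat.cast_nonneg _)
        _ = (1 - l) * N.choose k * (k + 1) := by ring
    have hratio' : (N.choose (k + 1) : ℝ) ≤ (1 - l) / l * N.choose k := by
      rw [div_mul_eq_mul_div, le_div_iff₀ hl0]
      exact hratio
    calc x ^ (k + 1) * N.choose (k + 1) ≤ x ^ (k + 1) * ((1 - l) / l * N.choose k) := by gcongr
      _ = x * (1 - l) / l * (x ^ k * N.choose k) := by ring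
  · rw [Nat.choose_eq_zero_of_lt (by omega), Nat.cast_zero, mul_zero]
    have : 0 ≤ 1 - l := by linarith
    positivity

theorem le_pow_mul_of_succ_le_mul {f : ℕ → ℝ} {q : ℝ} {a : ℕ} (hq : 0 ≤ q)
    (hstep : ∀ k ≥ a, f (k + 1) ≤ q * f k) (j : ℕ) : f (a + j) ≤ q ^ j * f a := by
  induction j with
  | zero => simp
  | succ j ih =>
    calc f (a + (j + 1)) ≤ q * f (a + j) := hstep _ (Nat.le_add_right _ _)
      _ ≤ q * (q ^ j * f a) := by gcongr
      _ = q ^ (j + 1) * f a := by ring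

theorem sum_Ico_le_of_succ_le_mul {f : ℕ → ℝ} {q : ℝ} {a b : ℕ} (hf : ∀ k, 0 ≤ f k)
    (hq0 : 0 ≤ q) (hq1 : q < 1) (hstep : ∀ k ≥ a, f (k + 1) ≤ q * f k) (hab : a ≤ b) (n : ℕ) :
    ∑ k ∈ Ico b n, f k ≤ q ^ (b - a) * f a / (1 - q) := by
  have hgeom : ∑ j ∈ range (n - b), q ^ j ≤ 1 / (1 - q) := by
    have := geom_sum_Ico_le_of_lt_one (m := 0) (n := n - b) hq0 hq1
    rwa [← range_eq_Ico, pow_zero] at this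
  have hfb : f b ≤ q ^ (b - a) * f a := by
    simpa [Nat.add_sub_cancel' hab] using le_pow_mul_of_succ_le_mul hq0 hstep (b - a)
  calc ∑ k ∈ Ico b n, f k = ∑ j ∈ range (n - b), f (b + j) := sum_Ico_eq_sum_range _ _ _
    _ ≤ ∑ j ∈ range (n - b), q ^ j * f b :=
        sum_le_sum fun j _ =>
          le_pow_mul_of_succ_le_mul hq0 (fun k hk => hstep k (hab.trans hk)) j
    _ = f b * ∑ j ∈ range (n - b), q ^ j := by rw [mul_sum]; simp only [mul_comm]
    _ ≤ f b * (1 / (1 - q)) := by gcongr; exact hf b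
    _ ≤ q ^ (b - a) * f a / (1 - q) := by
        rw [mul_one_div]
        gcongr

theorem blockR2_div_blockR1_le {l α : ℝ} (hl34 : 3 / 4 < l) (hl1 : l ≤ 1) (hlα : l ≤ α)
    (N : ℕ) :
    blockR2 α N / blockR1 l α N ≤
      (3 * (1 - l) / l) ^ (⌈α * N⌉₊ - ⌈l * N⌉₊) / (1 - 3 * (1 - l) / l) := by
  set q := 3 * (1 - l) / l
  set f : ℕ → ℝ := fun k => 3 ^ k * N.choose k
  have hl0 : 0 < l := by linarith
  obtain ⟨hq0, hq1⟩ := three_mul_one_sub_div_mem_Ico hl34 hl1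
  have hf0 : 0 < f ⌈l * N⌉₊ := three_pow_ceil_mul_choose_pos hl1 N
  have hR2 : blockR2 α N ≤ q ^ (⌈α * N⌉₊ - ⌈l * N⌉₊) * f ⌈l * N⌉₊ / (1 - q) := by
    rw [blockR2, ← Ico_add_one_right_eq_Icc]
    refine sum_Ico_le_of_succ_le_mul (fun k => by positivity) hq0 hq1 (fun k hk => ?_)
      (Nat.ceil_mono (by gcongr)) _
    exact pow_succ_mul_choose_succ_le (by norm_num) hl0 hl1 (Nat.ceil_le.1 hk)
  calc blockR2 α N / blockR1 l α N
      ≤ q ^ (⌈α * N⌉₊ - ⌈l * N⌉₊) * f ⌈l * N⌉₊ / (1 - q) / f ⌈l * N⌉₊ :=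
        div_le_div_of_eq_zero_or_le (by positivity) hf0 hR2 (blockR1_eq_zero_or_le l α N)
    _ = q ^ (⌈α * N⌉₊ - ⌈l * N⌉₊) / (1 - q) := by
        rw [div_right_comm, mul_div_cancel_right₀ _ hf0.ne']

theorem tendsto_ceil_mul_sub_ceil_mul_atTop {a b : ℝ} (ha : 0 ≤ a) (hab : a < b) :
    Tendsto (fun N : ℕ => ⌈b * N⌉₊ - ⌈a * N⌉₊) atTop atTop := by
  rw [← tendsto_natCast_atTop_iff (R := ℝ)]
  refine tendsto_atTop_mono (fun N => ?_) (tendsto_atTop_add_const_right _ (-1)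
    (tendsto_natCast_atTop_atTop.const_mul_atTop (sub_pos.2 hab)))
  have hceil : ⌈a * N⌉₊ ≤ ⌈b * N⌉₊ := Nat.ceil_mono (by gcongr)
  rw [Nat.cast_sub hceil]
  have hb := Nat.le_ceil (b * N)
  have ha := Nat.ceil_lt_add_one (mul_nonneg ha N.cast_nonneg)
  linarith

theorem block_ratio_bound_and_limit (l ε : ℝ) (hl : l ∈ Set.Ioo (3/4 : ℝ) 1)
    (hε : 0 < ε) (hle : l + ε ≤ 1) (α : ℝ) (hα : α = l + ε) :
    (∀ N : ℕ, 1 ≤ N →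
      blockR2 α N / blockR1 l α N ≤
        (4 : ℝ) ^ N * Real.exp (-(N : ℝ) * klBer α (3/4)) /
          ((3 : ℝ) ^ (⌈l * N⌉₊) * (N.choose ⌈l * N⌉₊ : ℝ))) ∧
    Tendsto (fun N : ℕ => blockR2 α N / blockR1 l α N) atTop (nhds 0) := by
  obtain ⟨hl34, hl1⟩ := hl
  have hlα : l < α := by linarith
  have hα1 : α ≤ 1 := hα ▸ hle
  refine ⟨fun N _ => ?_, ?_⟩
  · exact div_le_div_of_eq_zero_or_le (by positivity) (three_pow_ceil_mul_choose_pos hl1.le N)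
      (blockR2_le_four_pow_mul_exp (by linarith) hα1 N) (blockR1_eq_zero_or_le l α N)
  · set q := 3 * (1 - l) / l
    obtain ⟨hq0, hq1⟩ := three_mul_one_sub_div_mem_Ico hl34 hl1.le
    have hlim : Tendsto (fun N : ℕ => q ^ (⌈α * N⌉₊ - ⌈l * N⌉₊) / (1 - q)) atTop (nhds 0) := by
      simpa using ((tendsto_pow_atTop_nhds_zero_of_lt_one hq0 hq1).comp
        (tendsto_ceil_mul_sub_ceil_mul_atTop (by linarith) hlα)).div_const (1 - q)
    refine squeeze_zero (fun N => ?_) (fun N => blockR2_div_blockR1_le hl34 hl1.le hlα.le N) hlim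
    rw [blockR2, blockR1]
    positivity
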